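/- arXiv:2203.09693 — 2 statements merged into one kernel-verified Lean document; each statement's English description precedes it below -/
import Mathlib

section
/- For any pair of unit vectors w₁, w₂ in ℝⁿ with w₁ᵀw₂ ≥ 0, it holds that ‖w₁ - w₂‖₂² ≤ ‖w₁w₁ᵀ - w₂w₂ᵀ‖_F² ≤ 2‖w₁ - w₂‖₂². -/
/-!
With `t = ⟪w₁, w₂⟫`, expanding the squares gives `‖w₁ - w₂‖² = 2 - 2t` and
`‖w₁w₁ᵀ - w₂w₂ᵀ‖_F² = 2 - 2t² = (1 + t) ‖w₁ - w₂‖²`, and `1 ≤ 1 + t ≤ 2` because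
`0 ≤ t ≤ 1` by hypothesis and Cauchy–Schwarz.
-/

open Finset

section Expansion

variable {ι R : Type*} [CommRing R] (s : Finset ι) (x y : ι → R)

theorem sum_sub_sq_eq :
    ∑ i ∈ s, (x i - y i) ^ 2 =
      ∑ i ∈ s, x i ^ 2 + ∑ i ∈ s, y i ^ 2 - 2 * ∑ i ∈ s, x i * y i := by
  simp only [sub_sq, sum_sub_distrib, sum_add_distrib, mul_sum, mul_assoc]
  ring

theorem sum_sum_outer_sub_sq_eq :
    ∑ i ∈ s, ∑ j ∈ s, (x i * x j - y i * y j) ^ 2 =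
      (∑ i ∈ s, x i ^ 2) ^ 2 + (∑ i ∈ s, y i ^ 2) ^ 2 - 2 * (∑ i ∈ s, x i * y i) ^ 2 := by
  have expand : ∀ i j, (x i * x j - y i * y j) ^ 2 =
      x i ^ 2 * x j ^ 2 + y i ^ 2 * y j ^ 2 - 2 * ((x i * y i) * (x j * y j)) :=
    fun i j => by ring
  simp only [expand, sum_sub_distrib, sum_add_distrib, ← mul_sum, ← sum_mul, sq]

end Expansion

theorem stmt_0 (n : ℕ) (w₁ w₂ : Fin n → ℝ)
    (h₁ : ∑ i, w₁ i ^ 2 = 1) (h₂ : ∑ i, w₂ i ^ 2 = 1)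
    (hpos : 0 ≤ ∑ i, w₁ i * w₂ i) :
    (∑ i, (w₁ i - w₂ i) ^ 2) ≤ (∑ i, ∑ j, (w₁ i * w₁ j - w₂ i * w₂ j) ^ 2) ∧
    (∑ i, ∑ j, (w₁ i * w₁ j - w₂ i * w₂ j) ^ 2) ≤ 2 * ∑ i, (w₁ i - w₂ i) ^ 2 := by
  set t := ∑ i, w₁ i * w₂ i
  have ht : t ≤ 1 := by
    have cauchy_schwarz := sum_mul_sq_le_sq_mul_sq univ w₁ w₂
    rw [h₁, h₂, one_mul] at cauchy_schwarz
    exact (sq_le_one_iff_abs_le_one t).mp cauchy_schwarz |>.trans' (le_abs_self t)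
  have hdist : ∑ i, (w₁ i - w₂ i) ^ 2 = 2 - 2 * t := by
    rw [sum_sub_sq_eq, h₁, h₂]; ring
  have hfrob : ∑ i, ∑ j, (w₁ i * w₁ j - w₂ i * w₂ j) ^ 2 = (1 + t) * (2 - 2 * t) := by
    rw [sum_sum_outer_sub_sq_eq, h₁, h₂]; ring
  rw [hdist, hfrob]
  constructor <;> nlinarith
end

section
/- Let V ∈ ℝ^{n×n} be positive semidefinite, let K ⊆ ℝⁿ be a set contained in the unit sphere, and let 𝒫 : ℝⁿ → K be a projection map satisfying ‖x - 𝒫(x)‖₂ ≤ ‖x - w‖₂ for all w ∈ K. Define the iteration w^{(t+1)} = 𝒫(V w^{(t)}) with w^{(0)} ∈ K, and Q(x) = xᵀVx. Then the sequence Q(w^{(t)}) is monotonically non-decreasing in t. -/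
/-!
For `a` in `K`, the projection `b = 𝒫 (V a)` is a point of `K` at least as close to `V a` as `a`;
since all points of `K` have the same norm, this says `⟪V a, a⟫ ≤ ⟪V a, b⟫`.
Positive semidefiniteness then gives
`Q b - Q a = Q (b - a) + 2 (⟪V a, b⟫ - ⟪V a, a⟫) ≥ 0`.
-/

open scoped Matrix RealInnerProductSpace

theorem real_inner_le_inner_of_norm_sub_le {E : Type*} [NormedAddCommGroup E]
    [InnerProductSpace ℝ E] {x u v : E} (huv : ‖u‖ = ‖v‖) (h : ‖x - u‖ ≤ ‖x - v‖) :
    ⟪x, v⟫ ≤ ⟪x, u⟫ := by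
  have hsq := pow_le_pow_left₀ (norm_nonneg _) h 2
  rw [norm_sub_sq_real, norm_sub_sq_real, huv] at hsq
  linarith

theorem Matrix.PosSemidef.dotProduct_mulVec_self_le_of_le {ι : Type*} [Fintype ι]
    {V : Matrix ι ι ℝ} (hV : V.PosSemidef) {a b : ι → ℝ}
    (h : a ⬝ᵥ V *ᵥ a ≤ b ⬝ᵥ V *ᵥ a) : a ⬝ᵥ V *ᵥ a ≤ b ⬝ᵥ V *ᵥ b := by
  have hsymm : a ⬝ᵥ V *ᵥ b = b ⬝ᵥ V *ᵥ a := by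
    rw [dotProduct_mulVec, ← vecMul_transpose, (isHermitian_iff_isSymm.mp hV.1).eq, dotProduct_comm]
  have hnonneg : 0 ≤ (b - a) ⬝ᵥ V *ᵥ (b - a) := hV.dotProduct_mulVec_nonneg (b - a)
  simp only [mulVec_sub, dotProduct_sub, sub_dotProduct, hsymm] at hnonneg
  linarith

open scoped Matrix in
theorem stmt_3_general (n : ℕ) (V : Matrix (Fin n) (Fin n) ℝ) (hV : V.PosSemidef)
    (K : Set (EuclideanSpace ℝ (Fin n)))
    (hK : ∀ u ∈ K, ‖u‖ = 1)
    (P : EuclideanSpace ℝ (Fin n) → EuclideanSpace ℝ (Fin n))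
    (hPK : ∀ x, P x ∈ K)
    (hP : ∀ x, ∀ u ∈ K, ‖x - P x‖ ≤ ‖x - u‖)
    (w : ℕ → EuclideanSpace ℝ (Fin n)) (hw0 : w 0 ∈ K)
    (hiter : ∀ t, w (t + 1) = P ((WithLp.toLp 2 (V.mulVec (w t)) : EuclideanSpace ℝ (Fin n)))) :
    Monotone fun t => (w t : Fin n → ℝ) ⬝ᵥ V.mulVec (w t) := by
  have hwK : ∀ t, w t ∈ K := fun t => Nat.rec hw0 (fun t _ => hiter t ▸ hPK _) t
  refine monotone_nat_of_le_succ fun t => hV.dotProduct_mulVec_self_le_of_le ?_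
  have hclose := hiter t ▸ hP (WithLp.toLp 2 (V *ᵥ w t)) (w t) (hwK t)
  have hinner := real_inner_le_inner_of_norm_sub_le
    (by rw [hK _ (hwK (t + 1)), hK _ (hwK t)]) hclose
  simpa [EuclideanSpace.inner_eq_star_dotProduct, dotProduct_comm] using hinner

open scoped Matrix in
theorem stmt_3 (n : ℕ) (V : Matrix (Fin n) (Fin n) ℝ) (hV : V.PosSemidef)
    (K : Set (EuclideanSpace ℝ (Fin n))) (hKne : K.Nonempty)
    (hK : ∀ u ∈ K, ‖u‖ = 1)
    (P : EuclideanSpace ℝ (Fin n) → EuclideanSpace ℝ (Fin n))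
    (hPK : ∀ x, P x ∈ K)
    (hP : ∀ x, ∀ u ∈ K, ‖x - P x‖ ≤ ‖x - u‖)
    (w : ℕ → EuclideanSpace ℝ (Fin n)) (hw0 : w 0 ∈ K)
    (hiter : ∀ t, w (t + 1) = P ((WithLp.toLp 2 (V.mulVec (w t)) : EuclideanSpace ℝ (Fin n)))) :
    Monotone fun t => (w t : Fin n → ℝ) ⬝ᵥ V.mulVec (w t) :=
  stmt_3_general n V hV K hK P hPK hP w hw0 hiter
end
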